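/- arXiv:2510.03941 — 3 statements merged into one kernel-verified Lean document; each statement's English description precedes it below -/
import Mathlib

section
/- The conflict graph of an i-RSC execution is acyclic: if (e, ν) is an execution in which every matching pair in the valid communication ν has the form {j, j+1} (the receive immediately follows its matched send), then the directed conflict graph CG(e, ν) has no directed cycle. -/
/-- Communication actions: `send p q m` (written `pq!m`) and `recv p q m`
(written `pq?m`, performed by `q`). -/
inductive CAct (P M : Type) where
  | send (p q : P) (m : M)
  | recv (p q : P) (m : M)

namespace CAct

/-- The active process of an action: the sender of a send, the receiver of a
receive. -/
def active {P M : Type} : CAct P M → P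
  | .send p _ _ => p
  | .recv _ q _ => q

/-- The channel of an action. -/
def chan {P M : Type} : CAct P M → P × P
  | .send p q _ => (p, q)
  | .recv p q _ => (p, q)

/-- Whether an action is a send. -/
def isSend {P M : Type} : CAct P M → Prop
  | .send _ _ _ => True
  | .recv _ _ _ => False

end CAct

variable {P M : Type}

/-- `x` is a matching pair of `e`: two indices `j < j'` with `a_j` a send and
`a_{j'}` a receive on the same channel (the messages need not coincide, to
account for interference). -/
def IsMatchingPair (e : List (CAct P M)) (x : Finset (Fin e.length)) : Prop :=
  ∃ j j' : Fin e.length, j < j' ∧ x = {j, j'} ∧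
    (e.get j).isSend ∧ ¬ (e.get j').isSend ∧ (e.get j).chan = (e.get j').chan

/-- `x` is an unmatched send: a singleton `{j}` with `a_j` a send. -/
def IsUnmatchedSend (e : List (CAct P M)) (x : Finset (Fin e.length)) : Prop :=
  ∃ j : Fin e.length, x = {j} ∧ (e.get j).isSend

/-- `ν` is a valid communication of `e`: a partition of the indices of `e`
into interactions, each being a matching pair or an unmatched send. -/
def ValidComm (e : List (CAct P M)) (ν : Finset (Finset (Fin e.length))) : Prop :=
  (∀ x ∈ ν, IsMatchingPair e x ∨ IsUnmatchedSend e x) ∧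
  (∀ j : Fin e.length, ∃! x, x ∈ ν ∧ j ∈ x)

/-- `j ≺ j'`: `j < j'` and the actions at `j`, `j'` do not commute (they have
the same active process or form a matching pair in `ν`). -/
def Prec (e : List (CAct P M)) (ν : Finset (Finset (Fin e.length)))
    (j j' : Fin e.length) : Prop :=
  j < j' ∧ ((e.get j).active = (e.get j').active ∨ ({j, j'} : Finset (Fin e.length)) ∈ ν)

/-- The edge relation of the conflict graph `CG(e, ν)`: an edge from
interaction `x₁` to a distinct interaction `x₂` whenever some `j₁ ∈ x₁`,
`j₂ ∈ x₂` satisfy `j₁ ≺ j₂`. -/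
def CGEdge (e : List (CAct P M)) (ν : Finset (Finset (Fin e.length)))
    (x₁ x₂ : Finset (Fin e.length)) : Prop :=
  x₁ ∈ ν ∧ x₂ ∈ ν ∧ x₁ ≠ x₂ ∧ ∃ j₁ ∈ x₁, ∃ j₂ ∈ x₂, Prec e ν j₁ j₂

/-- The conflict graph has no directed cycle. -/
def CGAcyclic (e : List (CAct P M)) (ν : Finset (Finset (Fin e.length))) : Prop :=
  ∀ x, ¬ Relation.TransGen (CGEdge e ν) x x

/-- `(e, ν)` is an i-RSC execution: every matching pair in `ν` has the form
`{j, j+1}` (the receive immediately follows its matched send). -/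
def IRSC (e : List (CAct P M)) (ν : Finset (Finset (Fin e.length))) : Prop :=
  ∀ x ∈ ν, IsMatchingPair e x →
    ∀ j j' : Fin e.length, j ∈ x → j' ∈ x → j < j' → (j' : ℕ) = (j : ℕ) + 1

/-- Isomorphism of the conflict graphs of `(e, ν)` and `(e', ν')`. -/
def CGIso (e : List (CAct P M)) (ν : Finset (Finset (Fin e.length)))
    (e' : List (CAct P M)) (ν' : Finset (Finset (Fin e'.length))) : Prop :=
  ∃ φ : {x // x ∈ ν} ≃ {x // x ∈ ν'},
    ∀ a b : {x // x ∈ ν}, CGEdge e ν a.1 b.1 ↔ CGEdge e' ν' (φ a).1 (φ b).1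

/-- `(e, ν)` is causally equivalent to some i-RSC execution. -/
def CausEquivIRSC (e : List (CAct P M)) (ν : Finset (Finset (Fin e.length))) : Prop :=
  ∃ (e' : List (CAct P M)) (ν' : Finset (Finset (Fin e'.length))),
    ValidComm e' ν' ∧ IRSC e' ν' ∧ CGIso e ν e' ν'

/-! In an i-RSC execution every interaction is `{j}` or `{j, j+1}`, so all its indices are at
most its least index plus one. An edge `x₁ → x₂` of the conflict graph comes from `j₁ < j₂` with
`j₁ ∈ x₁`, `j₂ ∈ x₂`, whence `min x₁ ≤ j₁ < j₂ ≤ min x₂ + 1`; the interactions are disjoint, so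
`min x₁ < min x₂`. The least index thus strictly increases along every path, and there is no
cycle. -/

section

variable {e : List (CAct P M)} {ν : Finset (Finset (Fin e.length))}

theorem ValidComm.eq_of_mem_of_mem (hν : ValidComm e ν) {x y : Finset (Fin e.length)}
    (hx : x ∈ ν) (hy : y ∈ ν) {j : Fin e.length} (hjx : j ∈ x) (hjy : j ∈ y) : x = y :=
  (hν.2 j).unique ⟨hx, hjx⟩ ⟨hy, hjy⟩

theorem IRSC.le_min'_add_one (hν : ValidComm e ν) (hirsc : IRSC e ν)
    {x : Finset (Fin e.length)} (hx : x ∈ ν) {j : Fin e.length} (hj : j ∈ x) :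
    (j : ℕ) ≤ x.min' ⟨j, hj⟩ + 1 := by
  rcases hν.1 x hx with hpair | ⟨k, rfl, -⟩
  · obtain ⟨a, b, hab, rfl, -⟩ := id hpair
    have hb : (b : ℕ) = a + 1 := hirsc _ hx hpair a b (by simp) (by simp) hab
    have hmin : ({a, b} : Finset (Fin e.length)).min' ⟨j, hj⟩ = a := by
      simpa using hab.le
    rw [hmin]
    rcases Finset.mem_insert.1 hj with rfl | hj
    · omega
    · rw [Finset.mem_singleton.1 hj]; omega
  · simp [Finset.mem_singleton.1 hj]

theorem CGEdge.min_lt (hν : ValidComm e ν) (hirsc : IRSC e ν)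
    {x₁ x₂ : Finset (Fin e.length)} (h : CGEdge e ν x₁ x₂) : x₁.min < x₂.min := by
  obtain ⟨hx₁, hx₂, hne, j₁, hj₁, j₂, hj₂, hlt, -⟩ := h
  rw [← Finset.coe_min' ⟨j₁, hj₁⟩, ← Finset.coe_min' ⟨j₂, hj₂⟩, WithTop.coe_lt_coe]
  have hle₁ : x₁.min' ⟨j₁, hj₁⟩ ≤ j₁ := Finset.min'_le x₁ j₁ hj₁
  have hle₂ := hirsc.le_min'_add_one hν hx₂ hj₂
  have hle : x₁.min' ⟨j₁, hj₁⟩ ≤ x₂.min' ⟨j₂, hj₂⟩ := by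
    rw [Fin.le_def] at hle₁ ⊢
    rw [Fin.lt_def] at hlt
    omega
  refine hle.lt_of_ne fun heq => hne ?_
  exact hν.eq_of_mem_of_mem hx₁ hx₂ (Finset.min'_mem _ _) (heq.symm ▸ Finset.min'_mem _ _)

end

/-- The conflict graph of an i-RSC execution is acyclic. -/
theorem irsc_conflictGraph_acyclic {P M : Type}
    (e : List (CAct P M)) (ν : Finset (Finset (Fin e.length)))
    (hν : ValidComm e ν) (hirsc : IRSC e ν) :
    CGAcyclic e ν := by
  intro x hcycle
  have hmin := hcycle.lift Finset.min fun _ _ h => h.min_lt hν hirsc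
  rw [Relation.transGen_eq_self] at hmin
  exact lt_irrefl _ hmin
end

section
/- An execution (e, ν) is causally equivalent to an i-RSC execution if and only if its conflict graph CG(e, ν) is acyclic. -/
variable {P M : Type}

/-!
In an i-RSC execution every interaction occupies an interval of positions, so the first position
of an interaction strictly increases along each edge of the conflict graph, which is therefore
acyclic; acyclicity is invariant under isomorphism of conflict graphs.

Conversely, if `CG(e, ν)` is acyclic, extend it to a linear order of the interactions and sort the
actions by the rank of their interaction, breaking ties by position. This permutation keeps the
order of every pair of non-commuting actions, so the conflict graph does not change, and it turns
every interaction into a block of consecutive positions, which for a matching pair is the i-RSC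
condition.
-/

open Relation

universe u

lemma Relation.TransGen.lt_of_rel_lt {α β : Type*} [Preorder β] {r : α → α → Prop} {f : α → β}
    (hf : ∀ a b, r a b → f a < f b) {a b : α} (h : TransGen r a b) : f a < f b := by
  induction h with
  | single hab => exact hf _ _ hab
  | tail _ hbc ih => exact ih.trans (hf _ _ hbc)

theorem exists_linearOrder_strictMono_of_acyclic {α : Type u} {r : α → α → Prop}
    (hr : ∀ a, ¬ TransGen r a a) :
    ∃ (β : Type u) (_ : LinearOrder β) (f : α → β), f.Injective ∧ ∀ a b, r a b → f a < f b := by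
  have : IsStrictOrder α (TransGen r) := { irrefl := hr, trans := fun _ _ _ => TransGen.trans }
  let _ : PartialOrder α := partialOrderOfSO (TransGen r)
  refine ⟨LinearExtension α, inferInstance, toLinearExtension, fun _ _ h => h, fun a b hab => ?_⟩
  have hlt : a < b := TransGen.single hab
  exact (toLinearExtension.monotone hlt.le).lt_of_ne fun h => hlt.ne h

theorem List.exists_sort_by {α β : Type*} [LinearOrder β] (e : List α) {g : Fin e.length → β}
    (hg : g.Injective) :
    ∃ (e' : List α) (ρ : Fin e.length ≃ Fin e'.length),
      (∀ j, e'.get (ρ j) = e.get j) ∧ StrictMono (g ∘ ρ.symm) := by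
  set σ := Tuple.sort g
  refine ⟨List.ofFn (e.get ∘ σ), σ.symm.trans (finCongr List.length_ofFn.symm), fun j => ?_, ?_⟩
  · simp
  · have := (Tuple.monotone_sort g).strictMono_of_injective (hg.comp σ.injective)
    intro i i' h
    exact this (by simpa using h)

theorem ValidComm.eq_of_mem {e : List (CAct P M)} {ν : Finset (Finset (Fin e.length))}
    (hν : ValidComm e ν) {x y : Finset (Fin e.length)} {j : Fin e.length} (hx : x ∈ ν)
    (hy : y ∈ ν) (hjx : j ∈ x) (hjy : j ∈ y) : x = y :=
  (hν.2 j).unique ⟨hx, hjx⟩ ⟨hy, hjy⟩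

section IntervalInteractions

variable {e : List (CAct P M)} {ν : Finset (Finset (Fin e.length))}

theorem irsc_of_ordConnected (h : ∀ x ∈ ν, (x : Set (Fin e.length)).OrdConnected) :
    IRSC e ν := by
  rintro x hx ⟨a, b, hab, rfl, -⟩ j j' hj hj' hjj'
  obtain ⟨rfl, rfl⟩ : j = a ∧ j' = b := by
    simp only [Finset.mem_insert, Finset.mem_singleton] at hj hj'
    rcases hj with rfl | rfl <;> rcases hj' with rfl | rfl <;> simp_all [lt_asymm]
  by_contra hgap
  have hc : (⟨j + 1, by omega⟩ : Fin e.length) ∈ Set.Icc j j' := by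
    simp only [Set.mem_Icc, Fin.le_def]
    omega
  have := (h _ hx).out (by simp) (by simp) hc
  simp only [Finset.coe_insert, Finset.coe_singleton, Set.mem_insert_iff, Set.mem_singleton_iff,
    Fin.ext_iff] at this
  omega

theorem ordConnected_of_irsc (hν : ValidComm e ν) (hi : IRSC e ν) {x : Finset (Fin e.length)}
    (hx : x ∈ ν) : (x : Set (Fin e.length)).OrdConnected := by
  rcases hν.1 x hx with hpair | ⟨a, rfl, -⟩
  · obtain ⟨a, b, hab, rfl, -⟩ := id hpair
    have hb := hi _ hx hpair a b (by simp) (by simp) hab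
    convert Set.ordConnected_Icc (a := a) (b := b)
    ext c
    simp only [Finset.coe_insert, Finset.coe_singleton, Set.mem_insert_iff,
      Set.mem_singleton_iff, Set.mem_Icc, Fin.ext_iff, Fin.le_def]
    omega
  · simpa using Set.ordConnected_singleton

theorem cgAcyclic_of_irsc (hν : ValidComm e ν) (hi : IRSC e ν) : CGAcyclic e ν := by
  have hmin : ∀ x y, CGEdge e ν x y → x.min < y.min := by
    rintro x y ⟨hx, hy, hne, j, hjx, j', hj'y, hjj', -⟩
    have hj_lt : ∀ b ∈ y, j < b := fun b hb => lt_of_not_ge fun hbj =>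
      hne (hν.eq_of_mem hx hy hjx ((ordConnected_of_irsc hν hi hy).out hb hj'y ⟨hbj, hjj'.le⟩))
    calc x.min ≤ j := Finset.min_le hjx
      _ < y.min := (Finset.lt_inf_iff (WithTop.coe_lt_top j)).2
        fun b hb => WithTop.coe_lt_coe.2 (hj_lt b hb)
  exact fun x hcyc => lt_irrefl _ (hcyc.lt_of_rel_lt hmin)

end IntervalInteractions

theorem cgAcyclic_of_cgIso {e e' : List (CAct P M)} {ν : Finset (Finset (Fin e.length))}
    {ν' : Finset (Finset (Fin e'.length))} (hiso : CGIso e ν e' ν') (hac : CGAcyclic e' ν') :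
    CGAcyclic e ν := by
  classical
  obtain ⟨φ, hφ⟩ := hiso
  let g (x : Finset (Fin e.length)) : Finset (Fin e'.length) :=
    if hx : x ∈ ν then φ ⟨x, hx⟩ else ∅
  have hg : ∀ x y, CGEdge e ν x y → CGEdge e' ν' (g x) (g y) := fun x y h => by
    simpa [g, h.1, h.2.1] using (hφ ⟨x, h.1⟩ ⟨y, h.2.1⟩).1 h
  exact fun x hcyc => hac _ (hcyc.lift g hg)

def mapComm {m n : ℕ} (ρ : Fin m ≃ Fin n) (ν : Finset (Finset (Fin m))) :
    Finset (Finset (Fin n)) :=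
  ν.map ρ.finsetCongr.toEmbedding

section Reorder

variable {e e' : List (CAct P M)} {ν : Finset (Finset (Fin e.length))}
  {ρ : Fin e.length ≃ Fin e'.length}

theorem pair_mem_mapComm_iff {j j' : Fin e.length} :
    ({ρ j, ρ j'} : Finset (Fin e'.length)) ∈ mapComm ρ ν ↔ {j, j'} ∈ ν := by
  rw [mapComm, ← Finset.mem_map' ρ.finsetCongr.toEmbedding]
  simp [Finset.map_insert]

theorem prec_mapComm_iff (hget : ∀ j, e'.get (ρ j) = e.get j)
    (hρ : ∀ j j', Prec e ν j j' → ρ j < ρ j') {j j' : Fin e.length} :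
    Prec e' (mapComm ρ ν) (ρ j) (ρ j') ↔ Prec e ν j j' := by
  unfold Prec
  rw [hget, hget, pair_mem_mapComm_iff]
  refine ⟨fun ⟨hlt, hnc⟩ => ⟨?_, hnc⟩, fun h => ⟨hρ _ _ h, h.2⟩⟩
  rcases lt_trichotomy j j' with h | rfl | h
  · exact h
  · exact absurd hlt (lt_irrefl _)
  · exact absurd (hρ j' j ⟨h, hnc.imp Eq.symm fun h => by rwa [Finset.pair_comm]⟩) hlt.asymm

theorem validComm_mapComm (hν : ValidComm e ν) (hget : ∀ j, e'.get (ρ j) = e.get j)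
    (hρ : ∀ j j', Prec e ν j j' → ρ j < ρ j') : ValidComm e' (mapComm ρ ν) := by
  refine ⟨fun x' hx' => ?_, fun i => ?_⟩
  · obtain ⟨x, hx, rfl⟩ := Finset.mem_map.1 hx'
    rcases hν.1 x hx with ⟨j, j', hjj', rfl, hs, hr, hc⟩ | ⟨j, rfl, hs⟩
    · refine .inl ⟨ρ j, ρ j', hρ j j' ⟨hjj', .inr hx⟩, by simp [Finset.map_insert], ?_⟩
      simpa only [hget] using ⟨hs, hr, hc⟩
    · exact .inr ⟨ρ j, by simp, by rwa [hget]⟩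
  · obtain ⟨x, ⟨hx, hix⟩, huniq⟩ := hν.2 (ρ.symm i)
    refine ⟨ρ.finsetCongr x, ⟨Finset.mem_map_of_mem _ hx, by simpa using hix⟩, ?_⟩
    rintro y' ⟨hy', hiy'⟩
    obtain ⟨y, hy, rfl⟩ := Finset.mem_map.1 hy'
    simp only [Equiv.coe_toEmbedding, huniq y ⟨hy, by simpa using hiy'⟩]

theorem cgEdge_mapComm_iff (hget : ∀ j, e'.get (ρ j) = e.get j)
    (hρ : ∀ j j', Prec e ν j j' → ρ j < ρ j') {x y : Finset (Fin e.length)} :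
    CGEdge e' (mapComm ρ ν) (ρ.finsetCongr x) (ρ.finsetCongr y) ↔ CGEdge e ν x y := by
  have hmem : ∀ z, ρ.finsetCongr z ∈ mapComm ρ ν ↔ z ∈ ν := fun z => Finset.mem_map' _
  have hex : ∀ (z : Finset (Fin e.length)) (p : Fin e'.length → Prop),
      (∃ i ∈ ρ.finsetCongr z, p i) ↔ ∃ j ∈ z, p (ρ j) := fun z p => by
    simp only [Equiv.finsetCongr_apply, Finset.mem_map_equiv]
    exact ⟨fun ⟨i, hi, hp⟩ => ⟨ρ.symm i, hi, by rwa [ρ.apply_symm_apply]⟩,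
      fun ⟨j, hj, hp⟩ => ⟨ρ j, by rwa [ρ.symm_apply_apply], hp⟩⟩
  simp only [CGEdge, hmem, ρ.finsetCongr.injective.ne_iff, hex, prec_mapComm_iff hget hρ]

theorem cgIso_mapComm (hget : ∀ j, e'.get (ρ j) = e.get j)
    (hρ : ∀ j j', Prec e ν j j' → ρ j < ρ j') : CGIso e ν e' (mapComm ρ ν) :=
  ⟨ρ.finsetCongr.subtypeEquiv fun _ => (Finset.mem_map' _).symm,
    fun _ _ => (cgEdge_mapComm_iff hget hρ).symm⟩

theorem causEquivIRSC_of_reorder (hν : ValidComm e ν) (hget : ∀ j, e'.get (ρ j) = e.get j)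
    (hρ : ∀ j j', Prec e ν j j' → ρ j < ρ j')
    (hconv : ∀ x ∈ ν, (ρ '' (x : Set (Fin e.length))).OrdConnected) : CausEquivIRSC e ν := by
  refine ⟨e', mapComm ρ ν, validComm_mapComm hν hget hρ, irsc_of_ordConnected ?_,
    cgIso_mapComm hget hρ⟩
  intro x' hx'
  obtain ⟨x, hx, rfl⟩ := Finset.mem_map.1 hx'
  simpa using hconv x hx

end Reorder

theorem causEquivIRSC_of_cgAcyclic {e : List (CAct P M)} {ν : Finset (Finset (Fin e.length))}
    (hν : ValidComm e ν) (hac : CGAcyclic e ν) : CausEquivIRSC e ν := by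
  obtain ⟨β, _, F, hF, hF_edge⟩ := exists_linearOrder_strictMono_of_acyclic
    (r := fun a b : {x // x ∈ ν} => CGEdge e ν a b) fun a hcyc => hac a (hcyc.lift _ fun _ _ => id)
  choose I hI using fun j => (hν.2 j).exists
  have hI_eq : ∀ x ∈ ν, ∀ j ∈ x, I j = x := fun x hx j hj => hν.eq_of_mem (hI j).1 hx (hI j).2 hj
  let key (j : Fin e.length) : β ×ₗ Fin e.length := toLex (F ⟨I j, (hI j).1⟩, j)
  obtain ⟨e', ρ, hget, hsorted⟩ := e.exists_sort_by (g := key) fun j j' h => congrArg (·.2) h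
  have hρ_le : ∀ j j', ρ j ≤ ρ j' ↔ key j ≤ key j' := fun j j' => by
    simpa using (hsorted.le_iff_le (a := ρ j) (b := ρ j')).symm
  refine causEquivIRSC_of_reorder hν hget (fun j j' hprec => ?_) fun x hx => ?_
  · rw [← not_le, hρ_le, not_le, Prod.Lex.toLex_lt_toLex]
    by_cases hsame : I j = I j'
    · exact .inr ⟨by simp only [hsame], hprec.1⟩
    · exact .inl (hF_edge _ _ ⟨(hI j).1, (hI j').1, hsame, j, (hI j).2, j', (hI j').2, hprec⟩)
  · refine ⟨?_⟩
    rintro _ ⟨j, hj, rfl⟩ _ ⟨j', hj', rfl⟩ i ⟨hji, hij'⟩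
    obtain ⟨k, rfl⟩ := ρ.surjective i
    rw [hρ_le] at hji hij'
    have hFk : F ⟨I k, (hI k).1⟩ = F ⟨x, hx⟩ := by
      have h₁ := Prod.Lex.monotone_fst _ _ hji
      have h₂ := Prod.Lex.monotone_fst _ _ hij'
      simp only [key, ofLex_toLex, hI_eq x hx j hj, hI_eq x hx j' hj'] at h₁ h₂
      exact le_antisymm h₂ h₁
    have hk : I k = x := congrArg Subtype.val (hF hFk)
    exact ⟨k, hk ▸ (hI k).2, rfl⟩

/-- An execution `(e, ν)` is causally equivalent to an i-RSC execution iff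
its conflict graph `CG(e, ν)` is acyclic. -/
theorem causEquiv_irsc_iff_acyclic {P M : Type}
    (e : List (CAct P M)) (ν : Finset (Finset (Fin e.length)))
    (hν : ValidComm e ν) :
    CausEquivIRSC e ν ↔ CGAcyclic e ν :=
  ⟨fun ⟨_, _, hν', hi, hiso⟩ => cgAcyclic_of_cgIso hiso (cgAcyclic_of_irsc hν' hi),
    causEquivIRSC_of_cgAcyclic hν⟩
end

section
/- By Higman's lemma, every upward-closed set of tuples of words under the componentwise subword ordering has finitely many minimal elements; consequently the complement of the reachability set of a lossy FIFO system is a finite union of upward cones and the reachability set itself is a regular (recognisable) set. -/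
/-- Actions of a FIFO system: `send p q m` puts `m` on channel `pq`,
`recv p q m` consumes `m` from channel `pq` (performed by `q`), and
`tau p` is an internal action of `p`. -/
inductive Act (P M : Type) where
  | send (p q : P) (m : M)
  | recv (p q : P) (m : M)
  | tau  (p : P)

/-- A FIFO system: one FIFO automaton per process. -/
structure FSystem (P M : Type) where
  State : P → Type
  init : ∀ p, State p
  trans : ∀ p, State p → Act P M → State p → Prop

namespace FSystem

variable {P M : Type} [DecidableEq P]

/-- A configuration: a global state together with the contents of each channel. -/
abbrev Conf (S : FSystem P M) := (∀ p, S.State p) × (P × P → List M)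

/-- The initial configuration: initial states, all channels empty. -/
def initConf (S : FSystem P M) : Conf S := (S.init, fun _ => [])

/-- The (perfect-channel) labelled successor relation of a FIFO system. -/
def Step (S : FSystem P M) : Conf S → Act P M → Conf S → Prop
  | c, .send p q m, c' =>
      ∃ s', S.trans p (c.1 p) (.send p q m) s' ∧
        c'.1 = Function.update c.1 p s' ∧
        c'.2 = Function.update c.2 (p, q) (c.2 (p, q) ++ [m])
  | c, .recv p q m, c' =>
      ∃ s' rest, S.trans q (c.1 q) (.recv p q m) s' ∧
        c.2 (p, q) = m :: rest ∧
        c'.1 = Function.update c.1 q s' ∧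
        c'.2 = Function.update c.2 (p, q) rest
  | c, .tau p, c' =>
      ∃ s', S.trans p (c.1 p) (.tau p) s' ∧
        c'.1 = Function.update c.1 p s' ∧ c'.2 = c.2

/-- A configuration is `k`-bounded if every channel has at most `k` messages. -/
def Bounded (k : ℕ) {S : FSystem P M} (c : Conf S) : Prop :=
  ∀ ch : P × P, (c.2 ch).length ≤ k

/-- A `k`-bounded step: both endpoints are `k`-bounded. -/
def BStep (S : FSystem P M) (k : ℕ) (c : Conf S) (a : Act P M) (c' : Conf S) : Prop :=
  Step S c a c' ∧ Bounded k c ∧ Bounded k c'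

/-- Reachability by `k`-bounded executions, from an arbitrary configuration. -/
def BReach (S : FSystem P M) (k : ℕ) : Conf S → Conf S → Prop :=
  Relation.ReflTransGen (fun c c' => ∃ a, BStep S k c a c')

/-- The `k`-reachability set `RS_k(S)`. -/
def RSk (S : FSystem P M) (k : ℕ) : Set (Conf S) :=
  {c | BReach S k (initConf S) c}

/-- The (unbounded) reachability set. -/
def Reach (S : FSystem P M) : Set (Conf S) :=
  {c | Relation.ReflTransGen (fun c c' => ∃ a, Step S c a c') (initConf S) c}

end FSystem

namespace FSystem

variable {P M : Type} [DecidableEq P]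

/-- The successor relation under the lossiness interference model: on firing
any transition, any messages in any channel may additionally be dropped
(`w ⪰ w'` iff `w'` is a scattered subword of `w`). -/
def StepLossy (S : FSystem P M) : Conf S → Act P M → Conf S → Prop
  | c, .send p q m, c' =>
      ∃ s', S.trans p (c.1 p) (.send p q m) s' ∧
        c'.1 = Function.update c.1 p s' ∧
        (c'.2 (p, q)).Sublist (c.2 (p, q) ++ [m]) ∧
        ∀ ch, ch ≠ (p, q) → (c'.2 ch).Sublist (c.2 ch)
  | c, .recv p q m, c' =>
      ∃ s', S.trans q (c.1 q) (.recv p q m) s' ∧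
        c'.1 = Function.update c.1 q s' ∧
        (m :: c'.2 (p, q)).Sublist (c.2 (p, q)) ∧
        ∀ ch, ch ≠ (p, q) → (c'.2 ch).Sublist (c.2 ch)
  | c, .tau p, c' =>
      ∃ s', S.trans p (c.1 p) (.tau p) s' ∧
        c'.1 = Function.update c.1 p s' ∧
        ∀ ch, (c'.2 ch).Sublist (c.2 ch)

/-- The reachability set under lossiness. -/
def ReachLossy (S : FSystem P M) : Set (Conf S) :=
  {c | Relation.ReflTransGen (fun c c' => ∃ a, StepLossy S c a c') (initConf S) c}

end FSystem

/-- Algebraic recognisability (regularity) for a set of channel-content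
tuples: it is the preimage of a subset of a finite monoid under a map
compatible with componentwise concatenation. -/
def Recognisable {C M : Type} (L : Set (C → List M)) : Prop :=
  ∃ (Q : Type) (_ : Fintype Q) (_ : Monoid Q) (φ : (C → List M) → Q) (A : Set Q),
    (∀ u v : C → List M, φ (fun ch => u ch ++ v ch) = φ u * φ v) ∧
    L = φ ⁻¹' A

/-! By Higman's lemma the componentwise subword order on channel contents is a
well-quasi-order. The minimal elements of an upward-closed set form an antichain, hence
are finitely many, and by well-foundedness every element lies above one of them.
A lossy step may drop arbitrary letters at its end, so the lossy reachability set is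
downward closed in the channel contents and its complement is upward closed. A finite
union of cones whose generators have length at most `N` is saturated for the congruence
"same scattered subwords of length at most `N`", which has finitely many classes. -/

section WellQuasiOrder

variable {α : Type*} {r : α → α → Prop}

theorem WellQuasiOrdered.finite_minimals [Std.Antisymm r] (h : WellQuasiOrdered r) (U : Set α) :
    {x | x ∈ U ∧ ∀ y ∈ U, r y x → r x y}.Finite :=
  IsAntichain.finite_of_wellQuasiOrdered
    (fun x hx _ hy hne hxy => hne (antisymm hxy (hy.2 x hx.1 hxy))) h

theorem WellQuasiOrdered.exists_minimal_le [IsPreorder α r] (h : WellQuasiOrdered r) {U : Set α}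
    {x : α} (hx : x ∈ U) : ∃ m, (m ∈ U ∧ ∀ y ∈ U, r y m → r m y) ∧ r m x := by
  obtain ⟨m, ⟨hmU, hmx⟩, hmin⟩ := h.wellFounded.has_min {y | y ∈ U ∧ r y x} ⟨x, hx, refl x⟩
  refine ⟨m, ⟨hmU, fun y hy hym => ?_⟩, hmx⟩
  by_contra hmy
  exact hmin y ⟨hy, _root_.trans hym hmx⟩ ⟨hym, hmy⟩

theorem WellQuasiOrdered.eq_biUnion_minimals [IsPreorder α r] (h : WellQuasiOrdered r)
    {U : Set α} (hU : ∀ x ∈ U, ∀ y, r x y → y ∈ U) :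
    U = ⋃ b ∈ {x | x ∈ U ∧ ∀ y ∈ U, r y x → r x y}, {y | r b y} := by
  ext x
  simp only [Set.mem_iUnion, Set.mem_ofPred_eq, exists_prop]
  exact ⟨h.exists_minimal_le, fun ⟨b, hb, hbx⟩ => hU b hb.1 x hbx⟩

end WellQuasiOrder

section Higman

variable {C M : Type*}

instance List.isPreorder_sublist : IsPreorder (List M) List.Sublist where
  refl := List.Sublist.refl
  trans _ _ _ := List.Sublist.trans

instance Pi.isPreorder_sublist :
    IsPreorder (C → List M) fun x y => ∀ ch, (x ch).Sublist (y ch) where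
  refl x ch := List.Sublist.refl (x ch)
  trans _ _ _ hxy hyz ch := (hxy ch).trans (hyz ch)

instance Pi.antisymm_sublist :
    Std.Antisymm fun x y : C → List M => ∀ ch, (x ch).Sublist (y ch) where
  antisymm _ _ hxy hyx := funext fun ch => (hxy ch).antisymm (hyx ch)

theorem List.wellQuasiOrdered_sublist [Finite M] : WellQuasiOrdered (List.Sublist (α := M)) := by
  have higman := Set.finite_univ.partiallyWellOrderedOn.partiallyWellOrderedOn_sublistForall₂
    (· = · : M → M → Prop)
  have hrel : List.SublistForall₂ (· = · : M → M → Prop) = List.Sublist := by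
    ext l₁ l₂
    simp [List.sublistForall₂_iff]
  simpa only [Set.mem_univ, implies_true, Set.ofPred_true, Set.partiallyWellOrderedOn_univ_iff,
    hrel] using higman

theorem Pi.wellQuasiOrdered_sublist [Finite C] [Finite M] :
    WellQuasiOrdered fun x y : C → List M => ∀ ch, (x ch).Sublist (y ch) :=
  WellQuasiOrdered.pi fun _ => List.wellQuasiOrdered_sublist

end Higman

namespace FSystem

variable {P M : Type} [DecidableEq P] {S : FSystem P M}

theorem StepLossy.of_sublist {c c' : Conf S} {a : Act P M} (h : StepLossy S c a c')
    {w : P × P → List M} (hw : ∀ ch, (w ch).Sublist (c'.2 ch)) : StepLossy S c a (c'.1, w) := by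
  cases a with
  | send p q m =>
    obtain ⟨s', ht, hs, hpq, hch⟩ := h
    exact ⟨s', ht, hs, (hw _).trans hpq, fun ch hne => (hw ch).trans (hch ch hne)⟩
  | recv p q m =>
    obtain ⟨s', ht, hs, hpq, hch⟩ := h
    exact ⟨s', ht, hs, ((hw _).cons_cons m).trans hpq, fun ch hne => (hw ch).trans (hch ch hne)⟩
  | tau p =>
    obtain ⟨s', ht, hs, hch⟩ := h
    exact ⟨s', ht, hs, fun ch => (hw ch).trans (hch ch)⟩

theorem mem_reachLossy_of_sublist {c : Conf S} (hc : c ∈ ReachLossy S) {w : P × P → List M}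
    (hw : ∀ ch, (w ch).Sublist (c.2 ch)) : (c.1, w) ∈ ReachLossy S := by
  cases hc with
  | refl =>
    obtain rfl : w = fun _ => [] := funext fun ch => List.sublist_nil.mp (hw ch)
    exact .refl
  | tail hreach hstep =>
    obtain ⟨a, ha⟩ := hstep
    exact .tail hreach ⟨a, ha.of_sublist hw⟩

end FSystem

section Recognisable

variable {C M : Type}

theorem Recognisable.compl {L : Set (C → List M)} (h : Recognisable L) : Recognisable Lᶜ := by
  obtain ⟨Q, _, _, φ, A, hφ, rfl⟩ := h
  exact ⟨Q, ‹_›, ‹_›, φ, Aᶜ, hφ, rfl⟩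

theorem recognisable_preimage_of_append_congr {Y : Type*} (ψ : (C → List M) → Y)
    (hψ : (Set.range ψ).Finite)
    (hcongr : ∀ u u' v v', ψ u = ψ u' → ψ v = ψ v' →
      ψ (fun ch => u ch ++ v ch) = ψ (fun ch => u' ch ++ v' ch)) (A : Set Y) :
    Recognisable (ψ ⁻¹' A) := by
  let c : Con (C → FreeMonoid M) := { Setoid.ker ψ with mul' := hcongr _ _ _ _ }
  let ψ' : c.Quotient → Y := Quotient.lift ψ fun _ _ => id
  have hinj : ψ'.Injective := by
    rintro ⟨u⟩ ⟨v⟩ h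
    exact Quotient.sound h
  have : Finite (Set.range ψ') :=
    (hψ.subset (by rintro _ ⟨⟨u⟩, rfl⟩; exact ⟨u, rfl⟩)).to_subtype
  have : Finite c.Quotient := Finite.of_injective _ (Set.rangeFactorization_injective.mpr hinj)
  exact ⟨c.Quotient, Fintype.ofFinite _, inferInstance, c.mk', ψ' ⁻¹' A, map_mul c.mk', rfl⟩

def subwordsUpTo (N : ℕ) (w : List M) : Set (List M) := {u | u.length ≤ N ∧ u.Sublist w}

theorem mem_subwordsUpTo_append {N : ℕ} {u v x : List M} :
    x ∈ subwordsUpTo N (u ++ v) ↔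
      x.length ≤ N ∧ ∃ a ∈ subwordsUpTo N u, ∃ b ∈ subwordsUpTo N v, x = a ++ b := by
  simp only [subwordsUpTo, Set.mem_ofPred_eq, List.sublist_append_iff]
  constructor
  · rintro ⟨hx, a, b, rfl, ha, hb⟩
    have hab : a.length + b.length ≤ N := by simpa using hx
    exact ⟨hx, a, ⟨by omega, ha⟩, b, ⟨by omega, hb⟩, rfl⟩
  · rintro ⟨hx, a, ⟨-, ha⟩, b, ⟨-, hb⟩, rfl⟩
    exact ⟨hx, a, b, rfl, ha, hb⟩

theorem subwordsUpTo_append_congr {N : ℕ} {u u' v v' : List M}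
    (hu : subwordsUpTo N u = subwordsUpTo N u') (hv : subwordsUpTo N v = subwordsUpTo N v') :
    subwordsUpTo N (u ++ v) = subwordsUpTo N (u' ++ v') := by
  ext x
  simp only [mem_subwordsUpTo_append, hu, hv]

theorem finite_range_subwordsUpTo [Finite M] (N : ℕ) :
    (Set.range (subwordsUpTo (M := M) N)).Finite :=
  (List.finite_length_le M N).finite_subsets.subset <| by
    rintro _ ⟨w, rfl⟩ u hu
    exact hu.1

theorem recognisable_biUnion_cones [Finite C] [Finite M] {B : Set (C → List M)} (hB : B.Finite) :
    Recognisable (⋃ b ∈ B, {y | ∀ ch, (b ch).Sublist (y ch)}) := by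
  obtain ⟨N, hN⟩ := ((hB.prod Set.finite_univ).image fun p : _ × C => (p.1 p.2).length).bddAbove
  have hψ : (Set.range fun (w : C → List M) ch => subwordsUpTo N (w ch)).Finite :=
    (Set.Finite.pi fun _ => finite_range_subwordsUpTo N).subset <| by
      rintro _ ⟨w, rfl⟩ ch -
      exact ⟨w ch, rfl⟩
  convert recognisable_preimage_of_append_congr _ hψ
    (fun _ _ _ _ hu hv =>
      funext fun ch => subwordsUpTo_append_congr (congrFun hu ch) (congrFun hv ch))
    {S | ∃ b ∈ B, ∀ ch, b ch ∈ S ch}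
  ext y
  simp only [Set.mem_iUnion, Set.mem_preimage, Set.mem_ofPred_eq, subwordsUpTo, exists_prop]
  refine exists_congr fun b => and_congr_right fun hb => forall_congr' fun ch => ?_
  exact (and_iff_right (hN ⟨(b, ch), ⟨hb, trivial⟩, rfl⟩)).symm

end Recognisable

open FSystem in
/-- By Higman's lemma, every upward-closed set of tuples of words (over finite
alphabets) under the componentwise subword ordering has finitely many minimal
elements and is a finite union of upward cones; consequently the complement of
the reachability set of a lossy FIFO system is a finite union of upward cones
and the reachability set itself is recognisable (regular). -/
theorem higman_upward_closed_and_lossy_reach_regular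
    {P M : Type} [DecidableEq P] [Finite P] [Finite M] (S : FSystem P M) :
    (∀ U : Set ((P × P) → List M),
      (∀ x ∈ U, ∀ y, (∀ ch, (x ch).Sublist (y ch)) → y ∈ U) →
      {x | x ∈ U ∧ ∀ y ∈ U, (∀ ch, (y ch).Sublist (x ch)) →
            ∀ ch, (x ch).Sublist (y ch)}.Finite ∧
      ∃ B : Set ((P × P) → List M), B.Finite ∧
        U = ⋃ b ∈ B, {y | ∀ ch, (b ch).Sublist (y ch)}) ∧
    (∀ g : ∀ p, S.State p,
      (∃ B : Set ((P × P) → List M), B.Finite ∧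
        {w | (g, w) ∉ ReachLossy S} = ⋃ b ∈ B, {y | ∀ ch, (b ch).Sublist (y ch)}) ∧
      Recognisable {w | (g, w) ∈ ReachLossy S}) := by
  have higman := Pi.wellQuasiOrdered_sublist (C := P × P) (M := M)
  refine ⟨fun U hU => ⟨higman.finite_minimals U, _, higman.finite_minimals U,
    higman.eq_biUnion_minimals hU⟩, fun g => ?_⟩
  set U := {w | (g, w) ∉ ReachLossy S}
  have hUp : ∀ x ∈ U, ∀ y, (∀ ch, (x ch).Sublist (y ch)) → y ∈ U :=
    fun x hx y hxy hy => hx (mem_reachLossy_of_sublist hy hxy)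
  have hfin := higman.finite_minimals U
  have hcones := higman.eq_biUnion_minimals hUp
  refine ⟨⟨_, hfin, hcones⟩, ?_⟩
  have hrec := (recognisable_biUnion_cones hfin).compl
  rw [← hcones, Set.compl_ofPred] at hrec
  simpa only [not_not] using hrec
end
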